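/- Let (Ω, μ) be a measure space and 1 < p < q < ∞. If {E_i} is a countable collection of pairwise disjoint measurable subsets of Ω with E_0 = ⋃ E_i, and f ∈ L^{p,q}(Ω, μ), then ‖χ_{E_0} f‖_{L^{p,q}}^p ≤ ∑_{i≥1} ‖χ_{E_i} f‖_{L^{p,q}}^p. -/

import Mathlib

open MeasureTheory Set
open scoped ENNReal

/-- The nonincreasing rearrangement of `f` with respect to `μ`. -/
noncomputable def rearr {α : Type*} [MeasurableSpace α] (μ : Measure α)
    (f : α → ℝ) (t : ℝ) : ℝ≥0∞ :=
  sInf {v : ℝ≥0∞ | μ {x | v < ENNReal.ofReal |f x|} ≤ ENNReal.ofReal t}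

/-- The Lorentz `p,q`-(quasi)norm, `1 ≤ q < ∞`:
`‖f‖_{L^{p,q}} = (∫_0^∞ (t^{1/p} f*(t))^q dt/t)^{1/q}`. -/
noncomputable def lorentzNorm {α : Type*} [MeasurableSpace α] (μ : Measure α)
    (p q : ℝ) (f : α → ℝ) : ℝ≥0∞ :=
  (∫⁻ t in Ioi (0 : ℝ),
      (ENNReal.ofReal (t ^ (1 / p)) * rearr μ f t) ^ q * (ENNReal.ofReal t)⁻¹) ^ (1 / q)

open intervalIntegral in
lemma aux_set_eq {a : ℝ≥0∞} (ha0 : a ≠ 0) (hat : a ≠ ⊤) :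
    {s : ℝ | ENNReal.ofReal s < a} = Iio a.toReal := by
  ext s
  simp only [mem_setOf_eq, mem_Iio]
  rcases le_or_gt s 0 with hs | hs
  · have h1 : ENNReal.ofReal s = 0 := ENNReal.ofReal_eq_zero.2 hs
    have h2 : 0 < a.toReal := ENNReal.toReal_pos ha0 hat
    simp [h1, pos_iff_ne_zero.2 ha0, lt_of_le_of_lt hs h2]
  · rw [ENNReal.ofReal_lt_iff_lt_toReal hs.le hat]

lemma aux_L1 {r : ℝ} (hr : 0 < r) (a : ℝ≥0∞) :
    ∫⁻ s in Ioi (0:ℝ), ({s : ℝ | ENNReal.ofReal s < a}).indicator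
      (fun s => ENNReal.ofReal (s ^ (r - 1))) s
      = a ^ r * (ENNReal.ofReal r)⁻¹ := by
  rcases eq_or_ne a 0 with rfl | ha0
  · have : {s : ℝ | ENNReal.ofReal s < 0} = ∅ := by
      ext s; simp
    simp [this, ENNReal.zero_rpow_of_pos hr]
  rcases eq_or_ne a ⊤ with rfl | hat
  · have hset : {s : ℝ | ENNReal.ofReal s < ⊤} = univ := by
      ext s; simp [ENNReal.ofReal_lt_top]
    rw [hset, indicator_univ]
    have hnotint : ¬ IntegrableOn (fun s : ℝ => s ^ (r - 1)) (Ioi (1:ℝ)) := by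
      rw [integrableOn_Ioi_rpow_iff zero_lt_one]; linarith
    have hmeas : Measurable fun s : ℝ => s ^ (r - 1) :=
      measurable_id.pow_const _
    have htop : ∫⁻ s in Ioi (1:ℝ), ENNReal.ofReal (s ^ (r - 1)) = ⊤ := by
      by_contra hfin
      apply hnotint
      refine ⟨hmeas.aestronglyMeasurable, ?_⟩
      rw [hasFiniteIntegral_iff_ofReal ?_]
      · exact lt_top_iff_ne_top.2 hfin
      · filter_upwards [ae_restrict_mem measurableSet_Ioi] with s hs
        exact Real.rpow_nonneg (by linarith [mem_Ioi.1 hs]) _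
    have := lintegral_mono_set (μ := volume) (f := fun s : ℝ => ENNReal.ofReal (s ^ (r - 1)))
      (Ioi_subset_Ioi zero_le_one)
    rw [ENNReal.top_rpow_of_pos hr, ENNReal.top_mul (by simp [hr])]
    exact eq_top_mono (htop ▸ this) rfl
  · set c := a.toReal with hc_def
    have hc : 0 < c := ENNReal.toReal_pos ha0 hat
    rw [aux_set_eq ha0 hat, lintegral_indicator measurableSet_Iio,
      Measure.restrict_restrict measurableSet_Iio]
    have hIoo : Iio c ∩ Ioi (0:ℝ) = Ioo 0 c := by
      rw [inter_comm, Ioi_inter_Iio]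
    rw [hIoo]
    have hint : IntegrableOn (fun s : ℝ => s ^ (r - 1)) (Ioo 0 c) := by
      have h1 : IntervalIntegrable (fun s : ℝ => s ^ (r - 1)) volume 0 c :=
        intervalIntegral.intervalIntegrable_rpow' (by linarith)
      exact h1.1.mono_set Ioo_subset_Ioc_self
    have hnn : 0 ≤ᵐ[volume.restrict (Ioo 0 c)] fun s : ℝ => s ^ (r - 1) := by
      filter_upwards [ae_restrict_mem measurableSet_Ioo] with s hs
      exact Real.rpow_nonneg hs.1.le _
    rw [← ofReal_integral_eq_lintegral_ofReal hint hnn]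
    have hval : ∫ s in Ioo 0 c, s ^ (r - 1) = c ^ r / r := by
      rw [← integral_Ioc_eq_integral_Ioo, ← intervalIntegral.integral_of_le hc.le,
        integral_rpow (Or.inl (by linarith))]
      rw [sub_add_cancel, Real.zero_rpow hr.ne']
      ring
    rw [hval]
    have ha_eq : a = ENNReal.ofReal c := (ENNReal.ofReal_toReal hat).symm
    rw [ha_eq, ENNReal.ofReal_rpow_of_pos hc, ← ENNReal.ofReal_inv_of_pos hr,
      ← ENNReal.ofReal_mul (by positivity)]
    rw [div_eq_mul_inv]

lemma rearr_antitone {α : Type*} [MeasurableSpace α] (μ : Measure α) (f : α → ℝ) :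
    Antitone (rearr μ f) := by
  intro t t' h
  exact sInf_le_sInf fun v hv => le_trans hv (ENNReal.ofReal_le_ofReal h)

lemma rearr_measurable {α : Type*} [MeasurableSpace α] (μ : Measure α) (f : α → ℝ) :
    Measurable (rearr μ f) :=
  (rearr_antitone μ f).measurable

lemma lt_rearr_iff {α : Type*} [MeasurableSpace α] (μ : Measure α) (f : α → ℝ)
    (t : ℝ) (s : ℝ≥0∞) :
    s < rearr μ f t ↔ ENNReal.ofReal t < μ {x | s < ENNReal.ofReal |f x|} := by
  constructor
  · intro h
    by_contra hc
    push_neg at hc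
    have hmem : s ∈ {v : ℝ≥0∞ | μ {x | v < ENNReal.ofReal |f x|} ≤ ENNReal.ofReal t} := hc
    exact absurd (sInf_le hmem) (not_le.2 h)
  · intro h
    have hs_top : s ≠ ⊤ := by
      rintro rfl
      have : {x | (⊤:ℝ≥0∞) < ENNReal.ofReal |f x|} = ∅ := by
        ext x; simp
      rw [this] at h; simp at h
    have hunion : {x | s < ENNReal.ofReal |f x|}
        = ⋃ n : ℕ, {x | s + (n : ℝ≥0∞)⁻¹ < ENNReal.ofReal |f x|} := by
      ext x
      simp only [mem_setOf_eq, mem_iUnion]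
      constructor
      · intro hx
        obtain ⟨ε, hε, hlt⟩ := ENNReal.lt_iff_exists_add_pos_lt.1 hx
        obtain ⟨n, hn⟩ := ENNReal.exists_inv_nat_lt (by exact_mod_cast hε.ne' : (ε:ℝ≥0∞) ≠ 0)
        exact ⟨n, lt_of_le_of_lt (add_le_add le_rfl hn.le) hlt⟩
      · rintro ⟨n, hn⟩
        exact lt_of_le_of_lt (le_add_right le_rfl) hn
    have hdir : Directed (· ⊆ ·) fun n : ℕ => {x | s + (n : ℝ≥0∞)⁻¹ < ENNReal.ofReal |f x|} := by
      refine (Monotone.directed_le ?_)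
      intro m n hmn x hx
      refine lt_of_le_of_lt (add_le_add (le_refl s) ?_) (by exact hx)
      exact ENNReal.inv_le_inv.2 (by exact_mod_cast hmn)
    rw [hunion, Directed.measure_iUnion hdir] at h
    obtain ⟨n, hn⟩ := lt_iSup_iff.1 h
    have hv : s < s + ((n:ℝ≥0∞))⁻¹ :=
      ENNReal.lt_add_right hs_top (ENNReal.inv_ne_zero.2 (ENNReal.natCast_ne_top n))
    refine lt_of_lt_of_le hv (le_sInf ?_)
    intro u hu
    by_contra hc
    push_neg at hc
    have : μ {x | s + (n:ℝ≥0∞)⁻¹ < ENNReal.ofReal |f x|} ≤ μ {x | u < ENNReal.ofReal |f x|} :=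
      measure_mono fun x hx => lt_of_le_of_lt hc.le hx
    exact absurd (le_trans this hu) (not_le.2 hn)

lemma lorentz_integral_eq {α : Type*} [MeasurableSpace α] (μ : Measure α)
    {p q : ℝ} (hp : 0 < p) (hq : 0 < q) (g : α → ℝ) :
    ∫⁻ t in Ioi (0:ℝ), (ENNReal.ofReal (t ^ (1/p)) * rearr μ g t) ^ q * (ENNReal.ofReal t)⁻¹
      = ENNReal.ofReal p * ∫⁻ s in Ioi (0:ℝ),
          ENNReal.ofReal (s ^ (q-1)) *
            (μ {x | ENNReal.ofReal s < ENNReal.ofReal |g x|}) ^ (q/p) := by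
  have hqp : 0 < q / p := div_pos hq hp
  set R : ℝ → ℝ≥0∞ := rearr μ g with hR_def
  set D : ℝ → ℝ≥0∞ := fun s => μ {x | ENNReal.ofReal s < ENNReal.ofReal |g x|} with hD_def
  have hDanti : Antitone D := by
    intro s s' h
    exact measure_mono fun x hx => lt_of_le_of_lt (ENNReal.ofReal_le_ofReal h) hx
  have hDmeas : Measurable D := hDanti.measurable
  have hRmeas : Measurable R := rearr_measurable μ g
  have hoq0 : (ENNReal.ofReal q) ≠ 0 := by simp [hq]
  have hoqt : (ENNReal.ofReal q) ≠ ⊤ := ENNReal.ofReal_ne_top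
  have hoqp0 : (ENNReal.ofReal (q/p)) ≠ 0 := by simp [hqp]
  have hoqpt : (ENNReal.ofReal (q/p)) ≠ ⊤ := ENNReal.ofReal_ne_top
  have hind_meas : ∀ (r : ℝ) (a : ℝ≥0∞),
      Measurable (({s : ℝ | ENNReal.ofReal s < a}).indicator
        (fun s => ENNReal.ofReal (s ^ (r - 1)))) := fun r a =>
    ((measurable_id.pow_const _).ennreal_ofReal).indicator
      (measurableSet_lt ENNReal.measurable_ofReal measurable_const)
  -- Step 1
  have step1 : ∫⁻ t in Ioi (0:ℝ),
      (ENNReal.ofReal (t ^ (1/p)) * R t) ^ q * (ENNReal.ofReal t)⁻¹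
      = ∫⁻ t in Ioi (0:ℝ), ENNReal.ofReal (t ^ (q/p - 1)) * R t ^ q := by
    refine setLIntegral_congr_fun measurableSet_Ioi (fun t ht => ?_)
    have ht0 : (0:ℝ) < t := ht
    rw [ENNReal.mul_rpow_of_nonneg _ _ hq.le,
      ENNReal.ofReal_rpow_of_pos (Real.rpow_pos_of_pos ht0 _),
      ← Real.rpow_mul ht0.le, show 1/p*q = q/p by ring]
    have hsub : ENNReal.ofReal (t ^ (q/p)) * (ENNReal.ofReal t)⁻¹
        = ENNReal.ofReal (t ^ (q/p - 1)) := by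
      rw [← ENNReal.ofReal_inv_of_pos ht0,
        ← ENNReal.ofReal_mul (Real.rpow_nonneg ht0.le _)]
      congr 1
      rw [← Real.rpow_neg_one t, ← Real.rpow_add ht0]
      ring_nf
    rw [mul_right_comm, hsub]
  -- G and its s-integral
  set G : ℝ → ℝ → ℝ≥0∞ := fun t s =>
    ENNReal.ofReal (t ^ (q/p - 1)) *
      ({s : ℝ | ENNReal.ofReal s < R t}).indicator
        (fun s => ENNReal.ofReal (s ^ (q - 1))) s with hG_def
  have hJ : ∀ t : ℝ, ∫⁻ s in Ioi (0:ℝ), G t s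
      = ENNReal.ofReal (t ^ (q/p - 1)) * (R t ^ q * (ENNReal.ofReal q)⁻¹) := by
    intro t
    rw [lintegral_const_mul _ (hind_meas q (R t)), aux_L1 hq (R t)]
  have hJmeas : Measurable fun t => ∫⁻ s in Ioi (0:ℝ), G t s := by
    have : (fun t => ∫⁻ s in Ioi (0:ℝ), G t s)
        = fun t => ENNReal.ofReal (t ^ (q/p - 1)) * (R t ^ q * (ENNReal.ofReal q)⁻¹) :=
      funext hJ
    rw [this]
    exact ((measurable_id.pow_const _).ennreal_ofReal).mul
      ((hRmeas.pow_const q).mul_const _)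
  -- Step 2+3
  have step2 : ∫⁻ t in Ioi (0:ℝ), ENNReal.ofReal (t ^ (q/p - 1)) * R t ^ q
      = ENNReal.ofReal q * ∫⁻ t in Ioi (0:ℝ), ∫⁻ s in Ioi (0:ℝ), G t s := by
    rw [← lintegral_const_mul _ hJmeas]
    refine lintegral_congr fun t => ?_
    rw [hJ t, show ENNReal.ofReal q * (ENNReal.ofReal (t ^ (q/p - 1)) * (R t ^ q * (ENNReal.ofReal q)⁻¹))
      = ENNReal.ofReal (t ^ (q/p - 1)) * R t ^ q * (ENNReal.ofReal q * (ENNReal.ofReal q)⁻¹) from by ring,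
      ENNReal.mul_inv_cancel hoq0 hoqt, mul_one]
  -- Fubini
  have hGuncurry : Measurable (Function.uncurry G) := by
    have heq : Function.uncurry G = fun z : ℝ × ℝ =>
        ENNReal.ofReal (z.1 ^ (q/p - 1)) *
          (if ENNReal.ofReal z.2 < R z.1 then ENNReal.ofReal (z.2 ^ (q - 1)) else 0) := by
      funext z
      rw [Function.uncurry, hG_def]
      simp only [Set.indicator_apply, mem_setOf_eq]
    rw [heq]
    refine Measurable.mul ?_ ?_
    · exact ((measurable_fst.pow_const _)).ennreal_ofReal
    · refine Measurable.ite ?_ ?_ measurable_const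
      · exact measurableSet_lt (ENNReal.measurable_ofReal.comp measurable_snd)
          (hRmeas.comp measurable_fst)
      · exact (measurable_snd.pow_const _).ennreal_ofReal
  have hswap : ∫⁻ t in Ioi (0:ℝ), ∫⁻ s in Ioi (0:ℝ), G t s
      = ∫⁻ s in Ioi (0:ℝ), ∫⁻ t in Ioi (0:ℝ), G t s := by
    exact lintegral_lintegral_swap hGuncurry.aemeasurable
  -- inner t-integral
  have step5 : ∀ s : ℝ, ∫⁻ t in Ioi (0:ℝ), G t s
      = (D s ^ (q/p) * (ENNReal.ofReal (q/p))⁻¹) * ENNReal.ofReal (s ^ (q - 1)) := by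
    intro s
    have hGs : ∀ t : ℝ, G t s
        = ({t : ℝ | ENNReal.ofReal t < D s}).indicator
            (fun t => ENNReal.ofReal (t ^ (q/p - 1))) t * ENNReal.ofReal (s ^ (q - 1)) := by
      intro t
      rw [hG_def]
      simp only [Set.indicator_apply, mem_setOf_eq]
      by_cases hcond : ENNReal.ofReal t < D s
      · rw [if_pos hcond, if_pos ((lt_rearr_iff μ g t (ENNReal.ofReal s)).2 hcond)]
      · rw [if_neg hcond,
          if_neg (fun hmem => hcond ((lt_rearr_iff μ g t (ENNReal.ofReal s)).1 hmem)),
          mul_zero, zero_mul]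
    calc ∫⁻ t in Ioi (0:ℝ), G t s
        = ∫⁻ t in Ioi (0:ℝ), ({t : ℝ | ENNReal.ofReal t < D s}).indicator
            (fun t => ENNReal.ofReal (t ^ (q/p - 1))) t * ENNReal.ofReal (s ^ (q - 1)) :=
          lintegral_congr fun t => hGs t
      _ = (∫⁻ t in Ioi (0:ℝ), ({t : ℝ | ENNReal.ofReal t < D s}).indicator
            (fun t => ENNReal.ofReal (t ^ (q/p - 1))) t) * ENNReal.ofReal (s ^ (q - 1)) :=
          lintegral_mul_const _ (hind_meas (q/p) (D s))
      _ = (D s ^ (q/p) * (ENNReal.ofReal (q/p))⁻¹) * ENNReal.ofReal (s ^ (q - 1)) := by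
          rw [aux_L1 hqp (D s)]
  -- conclude
  rw [step1, step2, hswap]
  rw [lintegral_congr step5]
  have hpull : ∫⁻ s in Ioi (0:ℝ),
      (D s ^ (q/p) * (ENNReal.ofReal (q/p))⁻¹) * ENNReal.ofReal (s ^ (q - 1))
      = (ENNReal.ofReal (q/p))⁻¹ * ∫⁻ s in Ioi (0:ℝ),
          ENNReal.ofReal (s ^ (q - 1)) * D s ^ (q/p) := by
    rw [← lintegral_const_mul _ (show Measurable (fun s : ℝ => ENNReal.ofReal (s ^ (q - 1)) * D s ^ (q/p)) from ((measurable_id'.pow_const _).ennreal_ofReal).mul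
      (hDmeas.pow_const _))]
    exact lintegral_congr fun s => by ring
  rw [hpull, ← mul_assoc]
  congr 1
  have hkey : ENNReal.ofReal p * ENNReal.ofReal (q/p) = ENNReal.ofReal q := by
    rw [← ENNReal.ofReal_mul hp.le]
    congr 1
    field_simp
  rw [← hkey, mul_assoc, ENNReal.mul_inv_cancel hoqp0 hoqpt, mul_one]

lemma ennreal_rpow_rpow_inv {x : ℝ≥0∞} {r : ℝ} (hr : r ≠ 0) : (x ^ r) ^ (1/r) = x := by
  rw [← ENNReal.rpow_mul, mul_one_div_cancel hr, ENNReal.rpow_one]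

lemma ennreal_rpow_inv_rpow {x : ℝ≥0∞} {r : ℝ} (hr : r ≠ 0) : (x ^ (1/r)) ^ r = x := by
  rw [← ENNReal.rpow_mul, one_div_mul_cancel hr, ENNReal.rpow_one]

lemma minkowski_tsum {ν : Measure ℝ} {r : ℝ} (hr : 1 ≤ r) (h : ℕ → ℝ → ℝ≥0∞)
    (hm : ∀ i, Measurable (h i)) :
    (∫⁻ s, (∑' i, h i s) ^ r ∂ν) ^ (1/r) ≤ ∑' i, (∫⁻ s, h i s ^ r ∂ν) ^ (1/r) := by
  have hr0 : 0 < r := lt_of_lt_of_le one_pos hr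
  set S : ℕ → ℝ → ℝ≥0∞ := fun n s => ∑ i ∈ Finset.range n, h i s with hS_def
  have hSmeas : ∀ n, Measurable (S n) := fun n => Finset.measurable_sum _ (fun i _ => hm i)
  have hfin : ∀ n, (∫⁻ s, S n s ^ r ∂ν) ^ (1/r)
      ≤ ∑ i ∈ Finset.range n, (∫⁻ s, h i s ^ r ∂ν) ^ (1/r) := by
    intro n
    induction n with
    | zero =>
      simp [hS_def, ENNReal.zero_rpow_of_pos hr0,
        ENNReal.zero_rpow_of_pos (by positivity : (0:ℝ) < 1/r), hr0]
    | succ n ih =>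
      have hstep : ∀ s, S (n+1) s = S n s + h n s := fun s => Finset.sum_range_succ _ _
      calc (∫⁻ s, S (n+1) s ^ r ∂ν) ^ (1/r)
          = (∫⁻ s, (S n s + h n s) ^ r ∂ν) ^ (1/r) := by simp_rw [hstep]
        _ ≤ (∫⁻ s, S n s ^ r ∂ν) ^ (1/r) + (∫⁻ s, h n s ^ r ∂ν) ^ (1/r) :=
            ENNReal.lintegral_Lp_add_le (hSmeas n).aemeasurable (hm n).aemeasurable hr
        _ ≤ (∑ i ∈ Finset.range n, (∫⁻ s, h i s ^ r ∂ν) ^ (1/r))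
              + (∫⁻ s, h n s ^ r ∂ν) ^ (1/r) := add_le_add ih le_rfl
        _ = ∑ i ∈ Finset.range (n+1), (∫⁻ s, h i s ^ r ∂ν) ^ (1/r) :=
            (Finset.sum_range_succ _ _).symm
  have hSmono : Monotone S := by
    intro m n hmn s
    exact Finset.sum_le_sum_of_subset (Finset.range_subset_range.2 hmn)
  have htsum_eq : ∀ s, (∑' i, h i s) = ⨆ n, S n s := fun s => ENNReal.tsum_eq_iSup_nat
  have hsup_rpow : ∀ s, (⨆ n, S n s) ^ r = ⨆ n, (S n s) ^ r := by
    intro s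
    refine le_antisymm ?_ (iSup_le fun n => ENNReal.rpow_le_rpow (le_iSup (fun n => S n s) n) hr0.le)
    have h1 : (⨆ n, S n s) ≤ (⨆ n, S n s ^ r) ^ (1/r) := by
      refine iSup_le fun n => ?_
      rw [show S n s = (S n s ^ r) ^ (1/r) from (ennreal_rpow_rpow_inv hr0.ne').symm]
      exact ENNReal.rpow_le_rpow (le_iSup (fun n => S n s ^ r) n) (by positivity)
    calc (⨆ n, S n s) ^ r ≤ ((⨆ n, S n s ^ r) ^ (1/r)) ^ r :=
          ENNReal.rpow_le_rpow h1 hr0.le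
      _ = ⨆ n, S n s ^ r := ennreal_rpow_inv_rpow hr0.ne'
  have hint_eq : ∫⁻ s, (∑' i, h i s) ^ r ∂ν = ⨆ n, ∫⁻ s, S n s ^ r ∂ν := by
    rw [show (fun s => (∑' i, h i s) ^ r) = fun s => ⨆ n, S n s ^ r from
      funext fun s => by rw [htsum_eq s, hsup_rpow s]]
    exact lintegral_iSup (fun n => (hSmeas n).pow_const r)
      (fun m n hmn s => ENNReal.rpow_le_rpow (hSmono hmn s) hr0.le)
  rw [hint_eq]
  have hbound : (⨆ n, ∫⁻ s, S n s ^ r ∂ν) ≤ (∑' i, (∫⁻ s, h i s ^ r ∂ν) ^ (1/r)) ^ r := by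
    refine iSup_le fun n => ?_
    rw [show ∫⁻ s, S n s ^ r ∂ν = ((∫⁻ s, S n s ^ r ∂ν) ^ (1/r)) ^ r from
      (ennreal_rpow_inv_rpow hr0.ne').symm]
    exact ENNReal.rpow_le_rpow (le_trans (hfin n) (ENNReal.sum_le_tsum _)) hr0.le
  calc (⨆ n, ∫⁻ s, S n s ^ r ∂ν) ^ (1/r)
      ≤ ((∑' i, (∫⁻ s, h i s ^ r ∂ν) ^ (1/r)) ^ r) ^ (1/r) :=
        ENNReal.rpow_le_rpow hbound (by positivity)
    _ = ∑' i, (∫⁻ s, h i s ^ r ∂ν) ^ (1/r) := ennreal_rpow_rpow_inv hr0.ne'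

lemma D_indicator_add {α : Type*} [MeasurableSpace α] (μ : Measure α) (E : ℕ → Set α)
    (hE : ∀ i, MeasurableSet (E i)) (hdisj : Pairwise (Function.onFun Disjoint E))
    (f : α → ℝ) (hf : Measurable f) (v : ℝ≥0∞) :
    μ {x | v < ENNReal.ofReal |((⋃ i, E i).indicator f) x|}
      = ∑' i, μ {x | v < ENNReal.ofReal |((E i).indicator f) x|} := by
  set T : Set α := {x | v < ENNReal.ofReal |f x|} with hT_def
  have hT : MeasurableSet T :=
    measurableSet_lt measurable_const (hf.abs.ennreal_ofReal)
  have hset : ∀ S : Set α, {x | v < ENNReal.ofReal |S.indicator f x|} = S ∩ T := by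
    intro S; ext x
    by_cases hx : x ∈ S
    · simp [hT_def, hx, Set.indicator_of_mem]
    · simp [hT_def, hx, Set.indicator_of_notMem]
  have hdisj' : Pairwise (Function.onFun Disjoint fun i => E i ∩ T) := fun i j hij =>
    (hdisj hij).mono inter_subset_left inter_subset_left
  calc μ {x | v < ENNReal.ofReal |((⋃ i, E i).indicator f) x|}
      = μ (⋃ i, E i ∩ T) := by rw [hset, iUnion_inter]
    _ = ∑' i, μ (E i ∩ T) := measure_iUnion hdisj' fun i => (hE i).inter hT
    _ = ∑' i, μ {x | v < ENNReal.ofReal |((E i).indicator f) x|} :=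
        tsum_congr fun i => by rw [hset]


/-- Subadditivity of the `p`-th power of the Lorentz `p,q`-quasinorm over disjoint
sets when `1 < p < q < ∞`. -/
theorem subadditivity_lorentz_p_lt_q {α : Type*} [MeasurableSpace α] (μ : Measure α)
    (p q : ℝ) (hp : 1 < p) (hpq : p < q)
    (E : ℕ → Set α) (hE : ∀ i, MeasurableSet (E i))
    (hdisj : Pairwise (Function.onFun Disjoint E))
    (f : α → ℝ) (hf : Measurable f)
    (hfL : lorentzNorm μ p q f ≠ ⊤) :
    lorentzNorm μ p q ((⋃ i, E i).indicator f) ^ p ≤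
      ∑' i, lorentzNorm μ p q ((E i).indicator f) ^ p := by
  have hp0 : 0 < p := lt_trans one_pos hp
  have hq0 : 0 < q := lt_trans hp0 hpq
  set r := q / p with hr_def
  have hr1 : 1 ≤ r := le_of_lt ((one_lt_div hp0).2 hpq)
  have hr0 : 0 < r := lt_of_lt_of_le one_pos hr1
  have h1q : (1:ℝ)/q * p = 1/r := by
    rw [hr_def]; field_simp
  set T : (α → ℝ) → ℝ≥0∞ := fun g => ∫⁻ s in Ioi (0:ℝ),
    ENNReal.ofReal (s ^ (q-1)) *
      (μ {x | ENNReal.ofReal s < ENNReal.ofReal |g x|}) ^ r with hT_def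
  have hnorm_pow : ∀ g : α → ℝ,
      lorentzNorm μ p q g ^ p = (ENNReal.ofReal p * T g) ^ (1/r) := by
    intro g
    rw [lorentzNorm, ← ENNReal.rpow_mul, h1q, lorentz_integral_eq μ hp0 hq0 g]
  -- distribution functions
  set D : ℕ → ℝ → ℝ≥0∞ := fun i s =>
    μ {x | ENNReal.ofReal s < ENNReal.ofReal |((E i).indicator f) x|} with hD_def
  have hDmeas : ∀ i, Measurable (D i) := by
    intro i
    refine Antitone.measurable fun s s' hss' => ?_
    exact measure_mono fun x hx => lt_of_le_of_lt (ENNReal.ofReal_le_ofReal hss') hx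
  set w : ℝ → ℝ≥0∞ := fun s => ENNReal.ofReal p * ENNReal.ofReal (s ^ (q-1)) with hw_def
  have hwmeas : Measurable w :=
    measurable_const.mul ((measurable_id'.pow_const _).ennreal_ofReal)
  set h : ℕ → ℝ → ℝ≥0∞ := fun i s => (w s) ^ (1/r) * D i s with hh_def
  have hhmeas : ∀ i, Measurable (h i) := fun i =>
    (hwmeas.pow_const _).mul (hDmeas i)
  have key2 : ∀ i, ENNReal.ofReal p * T ((E i).indicator f)
      = ∫⁻ s in Ioi (0:ℝ), (h i s) ^ r := by
    intro i
    rw [hT_def]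
    beta_reduce
    rw [← lintegral_const_mul _ (show Measurable (fun s : ℝ => ENNReal.ofReal (s ^ (q-1)) *
        (μ {x | ENNReal.ofReal s < ENNReal.ofReal |((E i).indicator f) x|}) ^ r) from
      (((measurable_id'.pow_const _).ennreal_ofReal).mul ((hDmeas i).pow_const _)))]
    refine lintegral_congr fun s => ?_
    rw [hh_def, ENNReal.mul_rpow_of_nonneg _ _ hr0.le, ennreal_rpow_inv_rpow hr0.ne',
      hw_def]
    ring
  have key1 : ENNReal.ofReal p * T ((⋃ i, E i).indicator f)
      = ∫⁻ s in Ioi (0:ℝ), (∑' i, h i s) ^ r := by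
    have hD0meas : Measurable fun s : ℝ =>
        μ {x | ENNReal.ofReal s < ENNReal.ofReal |((⋃ i, E i).indicator f) x|} := by
      refine Antitone.measurable fun s s' hss' => ?_
      exact measure_mono fun x hx => lt_of_le_of_lt (ENNReal.ofReal_le_ofReal hss') hx
    rw [hT_def]
    beta_reduce
    rw [← lintegral_const_mul _ (show Measurable (fun s : ℝ => ENNReal.ofReal (s ^ (q-1)) *
        (μ {x | ENNReal.ofReal s < ENNReal.ofReal |((⋃ i, E i).indicator f) x|}) ^ r) from
      (((measurable_id'.pow_const _).ennreal_ofReal).mul (hD0meas.pow_const _)))]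
    refine lintegral_congr fun s => ?_
    rw [D_indicator_add μ E hE hdisj f hf (ENNReal.ofReal s)]
    have : (∑' i, h i s) = (w s) ^ (1/r) * ∑' i, D i s := by
      rw [hh_def]; exact ENNReal.tsum_mul_left
    rw [this, ENNReal.mul_rpow_of_nonneg _ _ hr0.le, ennreal_rpow_inv_rpow hr0.ne',
      hw_def, hD_def]
    ring
  rw [hnorm_pow, key1]
  calc (∫⁻ s in Ioi (0:ℝ), (∑' i, h i s) ^ r) ^ (1/r)
      ≤ ∑' i, (∫⁻ s in Ioi (0:ℝ), (h i s) ^ r) ^ (1/r) := minkowski_tsum hr1 h hhmeas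
    _ = ∑' i, lorentzNorm μ p q ((E i).indicator f) ^ p :=
        tsum_congr fun i => by rw [hnorm_pow, key2 i]
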